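/- With the setup of the IW-ELBO L_K(q) = E_{z_1,...,z_K iid ~ q}[ log((1/K) Σ_{i=1}^K w(z_i)) ] where w(z) = p(z)/q(z), the sequence K ↦ L_K(q) is nondecreasing: L_{K+1}(q) ≥ L_K(q) for all K ≥ 1. -/

import Mathlib

/-!
Among `K + 1` samples, the average of the `K + 1` leave-one-out means is the mean of all samples.
By Jensen's inequality for the concave logarithm, the average of the logarithms of the
leave-one-out means is therefore at most the logarithm of the full mean. Each leave-one-out
mean is distributed as a `K`-sample mean, so integrating gives `L_K ≤ L_{K+1}`.
-/

open MeasureTheory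

/-- The importance-weighted ELBO with `K` samples, for importance weight function `w`
and variational law `μ`. -/
noncomputable def IWELBO {d : ℕ} (μ : Measure (Fin d → ℝ)) [SigmaFinite μ]
    (w : (Fin d → ℝ) → ℝ) (K : ℕ) : ℝ :=
  ∫ zs : Fin K → (Fin d → ℝ),
    Real.log ((K : ℝ)⁻¹ * ∑ i, w (zs i)) ∂(Measure.pi fun _ => μ)

open Finset

theorem Fin.sum_sum_succAbove {M : Type*} [AddCommGroup M] {n : ℕ} (x : Fin (n + 1) → M) :
    ∑ j : Fin (n + 1), ∑ i : Fin n, x (j.succAbove i) = n • ∑ j, x j := by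
  have h : ∀ j, ∑ i : Fin n, x (j.succAbove i) = ∑ k, x k - x j := fun j => by
    rw [Fin.sum_univ_succAbove x j, add_sub_cancel_left]
  simp only [h, sum_sub_distrib, sum_const, succ_nsmul, add_sub_cancel_right]

theorem ConcaveOn.mean_map_leaveOneOut_mean_le {s : Set ℝ} {φ : ℝ → ℝ} (hφ : ConcaveOn ℝ s φ)
    {n : ℕ} (hn : 0 < n) {x : Fin (n + 1) → ℝ} (hx : ∀ i, x i ∈ s) :
    ((n + 1 : ℕ) : ℝ)⁻¹ * ∑ j : Fin (n + 1), φ ((n : ℝ)⁻¹ * ∑ i : Fin n, x (j.succAbove i))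
      ≤ φ (((n + 1 : ℕ) : ℝ)⁻¹ * ∑ i, x i) := by
  have hn' : (0 : ℝ) < n := Nat.cast_pos.mpr hn
  have hmean_mem (j : Fin (n + 1)) : (n : ℝ)⁻¹ * ∑ i : Fin n, x (j.succAbove i) ∈ s := by
    rw [mul_sum]
    refine hφ.1.sum_mem (fun _ _ => by positivity) ?_ fun i _ => hx _
    simp [hn'.ne']
  have hjensen := hφ.le_map_sum (t := univ) (w := fun _ => ((n + 1 : ℕ) : ℝ)⁻¹)
    (fun _ _ => by positivity) (by simp; field_simp) fun j _ => hmean_mem j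
  have hmean : ∑ j : Fin (n + 1),
      ((n + 1 : ℕ) : ℝ)⁻¹ * ((n : ℝ)⁻¹ * ∑ i : Fin n, x (j.succAbove i))
        = ((n + 1 : ℕ) : ℝ)⁻¹ * ∑ i, x i := by
    rw [← mul_sum, ← mul_sum, Fin.sum_sum_succAbove, nsmul_eq_mul,
      inv_mul_cancel_left₀ hn'.ne']
  simpa only [smul_eq_mul, ← mul_sum, hmean] using hjensen

section LeaveOneOut

variable {α : Type*} [MeasurableSpace α] (μ : Measure α) [IsProbabilityMeasure μ] {n : ℕ}

theorem measurePreserving_comp_succAbove (j : Fin (n + 1)) :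
    MeasurePreserving (fun x : Fin (n + 1) → α => x ∘ j.succAbove)
      (Measure.pi fun _ => μ) (Measure.pi fun _ => μ) :=
  measurePreserving_snd.comp (measurePreserving_piFinSuccAbove (fun _ => μ) j)

theorem integral_le_integral_of_mean_comp_succAbove_le {f : (Fin n → α) → ℝ}
    {g : (Fin (n + 1) → α) → ℝ} (hf : Integrable f (Measure.pi fun _ => μ))
    (hg : Integrable g (Measure.pi fun _ => μ))
    (hfg : ∀ x, ((n + 1 : ℕ) : ℝ)⁻¹ * ∑ j : Fin (n + 1), f (x ∘ j.succAbove) ≤ g x) :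
    ∫ y, f y ∂(Measure.pi fun _ => μ) ≤ ∫ x, g x ∂(Measure.pi fun _ => μ) := by
  have hcomp (j : Fin (n + 1)) := measurePreserving_comp_succAbove μ j
  have hcomp_int (j : Fin (n + 1)) : Integrable (fun x => f (x ∘ j.succAbove)) _ :=
    (hcomp j).integrable_comp_of_integrable hf
  have hcomp_integral (j : Fin (n + 1)) :
      ∫ x, f (x ∘ j.succAbove) ∂(Measure.pi fun _ => μ) = ∫ y, f y ∂(Measure.pi fun _ => μ) := by
    rw [← integral_map (hcomp j).measurable.aemeasurable ((hcomp j).map_eq ▸ hf.1),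
      (hcomp j).map_eq]
  calc ∫ y, f y ∂(Measure.pi fun _ => μ)
      = ∫ x, ((n + 1 : ℕ) : ℝ)⁻¹ * ∑ j : Fin (n + 1), f (x ∘ j.succAbove)
          ∂(Measure.pi fun _ => μ) := by
        rw [integral_const_mul, integral_finsetSum _ fun j _ => hcomp_int j]
        simp only [hcomp_integral, sum_const, card_univ, Fintype.card_fin, nsmul_eq_mul]
        rw [inv_mul_cancel_left₀ (by positivity)]
    _ ≤ ∫ x, g x ∂(Measure.pi fun _ => μ) :=
        integral_mono ((integrable_finsetSum _ fun j _ => hcomp_int j).const_mul _) hg hfg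

end LeaveOneOut

theorem stmt_10_general {d : ℕ} (K : ℕ) (hK : 1 ≤ K)
    (p q : (Fin d → ℝ) → ℝ)
    (hp : ∀ z, 0 < p z)
    (hq : ∀ z, 0 < q z)
    (w : (Fin d → ℝ) → ℝ) (hw : ∀ z, w z = p z / q z)
    (μ : Measure (Fin d → ℝ)) [IsProbabilityMeasure μ]
    (hintK : Integrable
      (fun zs : Fin K → (Fin d → ℝ) => Real.log ((K : ℝ)⁻¹ * ∑ i, w (zs i)))
      (Measure.pi fun _ => μ))
    (hintK1 : Integrable
      (fun zs : Fin (K + 1) → (Fin d → ℝ) => Real.log (((K + 1 : ℕ) : ℝ)⁻¹ * ∑ i, w (zs i)))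
      (Measure.pi fun _ => μ)) :
    IWELBO μ w K ≤ IWELBO μ w (K + 1) := by
  have hw_pos (z) : w z ∈ Set.Ioi 0 := by
    rw [Set.mem_Ioi, hw z]
    exact div_pos (hp z) (hq z)
  rw [IWELBO, IWELBO]
  refine integral_le_integral_of_mean_comp_succAbove_le μ hintK hintK1 fun zs => ?_
  exact strictConcaveOn_log_Ioi.concaveOn.mean_map_leaveOneOut_mean_le (x := fun i => w (zs i)) hK
    fun i => hw_pos (zs i)

theorem stmt_10 {d : ℕ} (K : ℕ) (hK : 1 ≤ K)
    (p q : (Fin d → ℝ) → ℝ) (pbar : ℝ) (hpbar : 0 < pbar)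
    (hp : ∀ z, 0 < p z) (hpint : Integrable p) (hptot : ∫ z, p z = pbar)
    (hq : ∀ z, 0 < q z) (hqmeas : Measurable q) (hqint : Integrable q)
    (hq1 : ∫ z, q z = 1)
    (w : (Fin d → ℝ) → ℝ) (hw : ∀ z, w z = p z / q z)
    (μ : Measure (Fin d → ℝ)) [IsProbabilityMeasure μ]
    (hμ : μ = volume.withDensity (fun z => ENNReal.ofReal (q z)))
    (hlogint : Integrable (fun z => |Real.log (w z)|) μ)
    (hwint : Integrable w μ)
    (hintK : Integrable
      (fun zs : Fin K → (Fin d → ℝ) => Real.log ((K : ℝ)⁻¹ * ∑ i, w (zs i)))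
      (Measure.pi fun _ => μ))
    (hintK1 : Integrable
      (fun zs : Fin (K + 1) → (Fin d → ℝ) => Real.log (((K + 1 : ℕ) : ℝ)⁻¹ * ∑ i, w (zs i)))
      (Measure.pi fun _ => μ)) :
    IWELBO μ w K ≤ IWELBO μ w (K + 1) :=
  stmt_10_general K hK p q hp hq w hw μ hintK hintK1
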